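/- arXiv:0904.2933 — 5 statements merged into one kernel-verified Lean document; each statement's English description precedes it below -/
import Mathlib

section
/- Let c > 0, let M ∈ ℝ be a nonzero constant, let φ_σ : ℝ⁴ → ℝ (σ = 1,…,4) and ψ : ℝ⁴ → ℝ be C¹ functions, let q : ℝ → ℝ⁴ be a twice differentiable curve and λ : ℝ → ℝ a function. Suppose that for all s: (i) Mc² + Σ_{p=1}^{3}(q̇^p(s))² > 0 and the constraint q̇⁴(s) = √(Mc² + Σ_{p=1}^{3}(q̇^p(s))²) holds; (ii) the Chetaev equations hold: for l = 1,2,3, −q̈^l + Σ_σ q̇^σ(∂φ_σ/∂q^l − ∂φ_l/∂q^σ) − ∂ψ/∂q^l = −λ(s) q̇^l/√(Mc² + Σ_p(q̇^p)²), and q̈⁴ + Σ_σ q̇^σ(∂φ_σ/∂q⁴ − ∂φ_4/∂q^σ) − ∂ψ/∂q⁴ = λ(s). Then for all s and all j = 1,2,3 the reduced equations in normal form hold: q̈^j = Σ_{l=1}^{3} q̇^l(∂φ_l/∂q^j − ∂φ_j/∂q^l) + √(Mc² + Σ_p(q̇^p)²)·(∂φ_4/∂q^j − ∂φ_j/∂q⁴)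 − ∂ψ/∂q^j − (q̇^j/(Mc²))·(Σ_{l=1}^{3} q̇^l ∂ψ/∂q^l + √(Mc² + Σ_p(q̇^p)²)·∂ψ/∂q⁴), where all partial derivatives of φ_σ and ψ are evaluated at q(s). -/
/-- Component `σ` of the velocity of a curve in `ℝ⁴`. -/
noncomputable def vel (q : ℝ → Fin 4 → ℝ) (σ : Fin 4) (s : ℝ) : ℝ :=
  deriv (fun τ => q τ σ) s

/-- Component `σ` of the acceleration of a curve in `ℝ⁴`. -/
noncomputable def acc (q : ℝ → Fin 4 → ℝ) (σ : Fin 4) (s : ℝ) : ℝ :=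
  deriv (vel q σ) s

/-- Partial derivative `∂f/∂q^σ` of a function on `ℝ⁴`. -/
noncomputable def pd (f : (Fin 4 → ℝ) → ℝ) (σ : Fin 4) (x : Fin 4 → ℝ) : ℝ :=
  fderiv ℝ f x (Pi.single σ 1)

/-!
Contracting the Chetaev equations with the velocity (the time equation with weight
`q̇⁴ = √(Mc² + Σ(q̇^p)²)`) kills the gyroscopic terms by antisymmetry, and the
acceleration terms cancel because differentiating the constraint gives
`q̇⁴ q̈⁴ = Σ q̇^p q̈^p`. What remains is `λ Mc² = -q̇⁴ Σ_σ q̇^σ ∂ψ/∂q^σ`; substituting this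
multiplier into the spatial equations gives the normal form.
-/

open Finset

theorem sum_mul_sum_mul_sub_eq_zero {ι R : Type*} [Fintype ι] [CommRing R]
    (v : ι → R) (g : ι → ι → R) :
    ∑ l, v l * ∑ σ, v σ * (g σ l - g l σ) = 0 := by
  simp only [mul_sum, mul_sub, sum_sub_distrib]
  rw [sum_comm (f := fun l σ => v l * (v σ * g l σ))]
  simp only [sub_eq_zero]
  exact sum_congr rfl fun _ _ => sum_congr rfl fun _ _ => by ring

theorem mul_deriv_eq_sum_mul_deriv_of_sq_eq {ι : Type*} [Fintype ι] {f : ℝ → ℝ}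
    {u : ι → ℝ → ℝ} {K s : ℝ} (hf : DifferentiableAt ℝ f s)
    (hu : ∀ p, DifferentiableAt ℝ (u p) s)
    (h : ∀ᶠ t in nhds s, f t ^ 2 = K + ∑ p, u p t ^ 2) :
    f s * deriv f s = ∑ p, u p s * deriv (u p) s := by
  have hlhs : HasDerivAt (fun t => f t ^ 2) (2 * f s * deriv f s) s := by
    simpa using hf.hasDerivAt.fun_pow 2
  have hrhs : HasDerivAt (fun t => f t ^ 2) (∑ p, 2 * u p s * deriv (u p) s) s := by
    refine HasDerivAt.congr_of_eventuallyEq ?_ h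
    simpa using ((HasDerivAt.fun_sum fun p _ => (hu p).hasDerivAt.fun_pow 2).const_add K)
  have := hlhs.unique hrhs
  simp only [mul_assoc, ← mul_sum] at this
  linarith

section Chetaev

variable {n : ℕ} {K lam : ℝ} {v a ψ : Fin (n + 1) → ℝ} {g : Fin (n + 1) → Fin (n + 1) → ℝ}

theorem chetaev_multiplier_mul_eq (hlast : v (Fin.last n) ≠ 0)
    (hK : v (Fin.last n) ^ 2 = K + ∑ p : Fin n, v p.castSucc ^ 2)
    (hconstr : v (Fin.last n) * a (Fin.last n) = ∑ p : Fin n, v p.castSucc * a p.castSucc)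
    (hspace : ∀ l : Fin n, -a l.castSucc + ∑ σ, v σ * (g σ l.castSucc - g l.castSucc σ)
      - ψ l.castSucc = -(lam * v l.castSucc) / v (Fin.last n))
    (htime : a (Fin.last n) + ∑ σ, v σ * (g σ (Fin.last n) - g (Fin.last n) σ)
      - ψ (Fin.last n) = lam) :
    lam * K = -(v (Fin.last n) * ∑ σ, v σ * ψ σ) := by
  set F : Fin (n + 1) → ℝ := fun l => ∑ σ, v σ * (g σ l - g l σ)
  have hF_space : ∀ l : Fin n, v l.castSucc * (F l.castSucc - ψ l.castSucc)
      = v l.castSucc * a l.castSucc - lam / v (Fin.last n) * v l.castSucc ^ 2 := by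
    intro l
    have := hspace l
    field_simp at this ⊢
    linear_combination v l.castSucc * this
  have hwork : ∑ σ, v σ * (F σ - ψ σ) = lam * K / v (Fin.last n) := by
    rw [Fin.sum_univ_castSucc, sum_congr rfl fun l _ => hF_space l, sum_sub_distrib,
      ← mul_sum, ← hconstr]
    field_simp
    linear_combination v (Fin.last n) ^ 2 * htime + lam * hK
  have hgyro : ∑ σ, v σ * (F σ - ψ σ) = -∑ σ, v σ * ψ σ := by
    have hF : ∑ σ, v σ * F σ = 0 := sum_mul_sum_mul_sub_eq_zero v g
    simp only [mul_sub, sum_sub_distrib, hF, zero_sub]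
  rw [hgyro] at hwork
  field_simp at hwork
  linarith

theorem chetaev_reduced_normal_form (hK0 : K ≠ 0) (hlast : v (Fin.last n) ≠ 0)
    (hK : v (Fin.last n) ^ 2 = K + ∑ p : Fin n, v p.castSucc ^ 2)
    (hconstr : v (Fin.last n) * a (Fin.last n) = ∑ p : Fin n, v p.castSucc * a p.castSucc)
    (hspace : ∀ l : Fin n, -a l.castSucc + ∑ σ, v σ * (g σ l.castSucc - g l.castSucc σ)
      - ψ l.castSucc = -(lam * v l.castSucc) / v (Fin.last n))
    (htime : a (Fin.last n) + ∑ σ, v σ * (g σ (Fin.last n) - g (Fin.last n) σ)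
      - ψ (Fin.last n) = lam) (j : Fin n) :
    a j.castSucc = ∑ σ, v σ * (g σ j.castSucc - g j.castSucc σ) - ψ j.castSucc
      - v j.castSucc / K * ∑ σ, v σ * ψ σ := by
  have hlam := chetaev_multiplier_mul_eq hlast hK hconstr hspace htime
  have hmult : lam / v (Fin.last n) = -(∑ σ, v σ * ψ σ) / K := by
    field_simp
    linear_combination hlam
  have hj := hspace j
  rw [neg_div, mul_div_right_comm, hmult] at hj
  linear_combination -hj

end Chetaev

theorem stmt3_general (c M : ℝ) (hc : 0 < c) (hM : M ≠ 0)
    (φ : Fin 4 → (Fin 4 → ℝ) → ℝ) (ψ : (Fin 4 → ℝ) → ℝ)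
    (q : ℝ → Fin 4 → ℝ) (lam : ℝ → ℝ)
    (hq2 : ∀ σ, Differentiable ℝ (vel q σ))
    (hpos : ∀ s, 0 < M * c ^ 2 + ∑ p : Fin 3, vel q p.castSucc s ^ 2)
    (hcon : ∀ s, vel q 3 s =
      Real.sqrt (M * c ^ 2 + ∑ p : Fin 3, vel q p.castSucc s ^ 2))
    (hchet1 : ∀ s, ∀ l : Fin 3,
      -acc q l.castSucc s
        + (∑ σ, vel q σ s * (pd (φ σ) l.castSucc (q s) - pd (φ l.castSucc) σ (q s)))
        - pd ψ l.castSucc (q s)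
      = -(lam s * vel q l.castSucc s)
          / Real.sqrt (M * c ^ 2 + ∑ p : Fin 3, vel q p.castSucc s ^ 2))
    (hchet2 : ∀ s,
      acc q 3 s + (∑ σ, vel q σ s * (pd (φ σ) 3 (q s) - pd (φ 3) σ (q s)))
        - pd ψ 3 (q s) = lam s) :
    ∀ s, ∀ j : Fin 3,
      acc q j.castSucc s =
        (∑ l : Fin 3, vel q l.castSucc s *
            (pd (φ l.castSucc) j.castSucc (q s) - pd (φ j.castSucc) l.castSucc (q s)))
          + Real.sqrt (M * c ^ 2 + ∑ p : Fin 3, vel q p.castSucc s ^ 2) *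
              (pd (φ 3) j.castSucc (q s) - pd (φ j.castSucc) 3 (q s))
          - pd ψ j.castSucc (q s)
          - vel q j.castSucc s / (M * c ^ 2) *
              ((∑ l : Fin 3, vel q l.castSucc s * pd ψ l.castSucc (q s))
                + Real.sqrt (M * c ^ 2 + ∑ p : Fin 3, vel q p.castSucc s ^ 2) *
                    pd ψ 3 (q s)) := by
  intro s j
  have hsq : ∀ t, vel q 3 t ^ 2 = M * c ^ 2 + ∑ p : Fin 3, vel q p.castSucc t ^ 2 := fun t => by
    rw [hcon t, Real.sq_sqrt (hpos t).le]
  have hv3 : vel q 3 s ≠ 0 := by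
    rw [hcon s]
    exact (Real.sqrt_pos.mpr (hpos s)).ne'
  have hconstr : vel q 3 s * acc q 3 s = ∑ p : Fin 3, vel q p.castSucc s * acc q p.castSucc s :=
    mul_deriv_eq_sum_mul_deriv_of_sq_eq (hq2 3 s) (fun p => hq2 p.castSucc s)
      (Filter.Eventually.of_forall hsq)
  have hspace := hchet1 s
  rw [← hcon s] at hspace
  have hMc : M * c ^ 2 ≠ 0 := mul_ne_zero hM (pow_ne_zero 2 hc.ne')
  rw [chetaev_reduced_normal_form (n := 3) (v := fun σ => vel q σ s) (a := fun σ => acc q σ s)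
    (ψ := fun σ => pd ψ σ (q s)) (g := fun σ τ => pd (φ σ) τ (q s)) hMc hv3 (hsq s) hconstr
    hspace (hchet2 s) j]
  rw [← hcon s]
  simp only [Fin.sum_univ_castSucc (n := 3)]
  -- `Fin.last 3` and the literal `3 : Fin 4` agree only up to unfolding
  rfl

/-- for a nonzero constant `M`, the Chetaev equations together with the
nonholonomic constraint `q̇⁴ = √(Mc² + Σ_p(q̇^p)²)` imply the reduced equations in
normal form.  (Index `3 : Fin 4` is the time index; `l.castSucc` for `l : Fin 3`
are the spatial indices.) -/
theorem stmt3 (c M : ℝ) (hc : 0 < c) (hM : M ≠ 0)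
    (φ : Fin 4 → (Fin 4 → ℝ) → ℝ) (ψ : (Fin 4 → ℝ) → ℝ)
    (hφ : ∀ σ, ContDiff ℝ 1 (φ σ)) (hψ : ContDiff ℝ 1 ψ)
    (q : ℝ → Fin 4 → ℝ) (lam : ℝ → ℝ)
    (hq1 : ∀ σ, Differentiable ℝ fun s => q s σ)
    (hq2 : ∀ σ, Differentiable ℝ (vel q σ))
    (hpos : ∀ s, 0 < M * c ^ 2 + ∑ p : Fin 3, vel q p.castSucc s ^ 2)
    (hcon : ∀ s, vel q 3 s =
      Real.sqrt (M * c ^ 2 + ∑ p : Fin 3, vel q p.castSucc s ^ 2))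
    (hchet1 : ∀ s, ∀ l : Fin 3,
      -acc q l.castSucc s
        + (∑ σ, vel q σ s * (pd (φ σ) l.castSucc (q s) - pd (φ l.castSucc) σ (q s)))
        - pd ψ l.castSucc (q s)
      = -(lam s * vel q l.castSucc s)
          / Real.sqrt (M * c ^ 2 + ∑ p : Fin 3, vel q p.castSucc s ^ 2))
    (hchet2 : ∀ s,
      acc q 3 s + (∑ σ, vel q σ s * (pd (φ σ) 3 (q s) - pd (φ 3) σ (q s)))
        - pd ψ 3 (q s) = lam s) :
    ∀ s, ∀ j : Fin 3,
      acc q j.castSucc s =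
        (∑ l : Fin 3, vel q l.castSucc s *
            (pd (φ l.castSucc) j.castSucc (q s) - pd (φ j.castSucc) l.castSucc (q s)))
          + Real.sqrt (M * c ^ 2 + ∑ p : Fin 3, vel q p.castSucc s ^ 2) *
              (pd (φ 3) j.castSucc (q s) - pd (φ j.castSucc) 3 (q s))
          - pd ψ j.castSucc (q s)
          - vel q j.castSucc s / (M * c ^ 2) *
              ((∑ l : Fin 3, vel q l.castSucc s * pd ψ l.castSucc (q s))
                + Real.sqrt (M * c ^ 2 + ∑ p : Fin 3, vel q p.castSucc s ^ 2) *
                    pd ψ 3 (q s)) :=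
  stmt3_general c M hc hM φ ψ q lam hq2 hpos hcon hchet1 hchet2
end

section
/- Let c > 0, let M : ℝ⁴ → ℝ, φ_σ : ℝ⁴ → ℝ (σ = 1,…,4) and ψ : ℝ⁴ → ℝ be C¹ functions, let q : ℝ → ℝ⁴ be a twice differentiable curve and λ : ℝ → ℝ a function such that for all s: M(q(s))c² + Σ_{p=1}^{3}(q̇^p(s))² > 0, the constraint q̇⁴(s) = √(M(q(s))c² + Σ_p(q̇^p(s))²) holds, and the Chetaev equations hold: for l = 1,2,3, −q̈^l + Σ_σ q̇^σ(∂φ_σ/∂q^l − ∂φ_l/∂q^σ) − ∂ψ/∂q^l = −λ q̇^l/√(M(q)c² + Σ_p(q̇^p)²), and q̈⁴ + Σ_σ q̇^σ(∂φ_σ/∂q⁴ − ∂φ_4/∂q^σ) − ∂ψ/∂q⁴ = λ. Then for all s, (d/ds)[(1/2)M(q(s))c² − ψ(q(s))] = λ(s)·M(q(s))c²/√(M(q(s))c² + Σ_p(q̇^p(s))²). Consequently, if moreover M(q(s)) ≠ 0 for all s, the multiplier is determined: λ(s) = (√(M(q(s))c² + Σ_p(q̇^p(s))²)/(M(q(s))c²))·(d/ds)[(1/2)M(q(s))c²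 − ψ(q(s))]. -/
/-!
On the constraint, `M(q)c² = g(q̇,q̇)`, so the derivative of `½M(q)c² − ψ(q)` is
`g(q̇,q̈) − dψ(q̇)`, which no longer involves derivatives of `M`. Contracting the Chetaev equations
with `q̇` produces exactly this quantity: the `φ`-terms form an antisymmetric form evaluated on
`(q̇,q̇)` and vanish, while the constraint forces contribute
`λ(q̇⁴ − Σ_p(q̇^p)²/q̇⁴) = λ M(q)c²/q̇⁴`. Dividing by `M(q)c² ≠ 0` then recovers `λ`.
-/

open Finset

/-- Index `3 : Fin 4` is the timelike coordinate `q⁴`; `p.castSucc` for `p : Fin 3` is `q^(p+1)`. -/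
def minkowskiNormSq (u : Fin 4 → ℝ) : ℝ :=
  u 3 ^ 2 - ∑ p : Fin 3, u p.castSucc ^ 2

theorem minkowskiNormSq_eq_of_eq_sqrt {u : Fin 4 → ℝ} {m : ℝ}
    (hm : 0 ≤ m + ∑ p : Fin 3, u p.castSucc ^ 2)
    (h : u 3 = √(m + ∑ p : Fin 3, u p.castSucc ^ 2)) :
    minkowskiNormSq u = m := by
  rw [minkowskiNormSq, h, Real.sq_sqrt hm]
  ring

theorem hasDerivAt_minkowskiNormSq {u : ℝ → Fin 4 → ℝ} {u' : Fin 4 → ℝ} {s : ℝ}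
    (hu : ∀ σ, HasDerivAt (fun τ => u τ σ) (u' σ) s) :
    HasDerivAt (fun τ => minkowskiNormSq (u τ))
      (2 * (u s 3 * u' 3 - ∑ p : Fin 3, u s p.castSucc * u' p.castSucc)) s := by
  have hsq : ∀ σ, HasDerivAt (fun τ => u τ σ ^ 2) (2 * (u s σ * u' σ)) s := fun σ =>
    ((hu σ).fun_pow 2).congr_deriv (by push_cast; ring)
  refine ((hsq 3).sub (HasDerivAt.fun_sum fun (p : Fin 3) _ => hsq p.castSucc)).congr_deriv ?_
  rw [mul_sub, mul_sum]

theorem fderiv_apply_eq_sum_pd {f : (Fin 4 → ℝ) → ℝ} (x v : Fin 4 → ℝ) :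
    fderiv ℝ f x v = ∑ σ, v σ * pd f σ x := by
  conv_lhs => rw [← Finset.univ_sum_single v]
  simp only [map_sum, pd]
  refine sum_congr rfl fun σ _ => ?_
  rw [← smul_eq_mul, ← map_smul, ← Pi.single_smul', smul_eq_mul, mul_one]

theorem hasDerivAt_comp_eq_sum_vel_mul_pd {f : (Fin 4 → ℝ) → ℝ} {q : ℝ → Fin 4 → ℝ} {s : ℝ}
    (hf : DifferentiableAt ℝ f (q s)) (hq : ∀ σ, DifferentiableAt ℝ (fun τ => q τ σ) s) :
    HasDerivAt (fun τ => f (q τ)) (∑ σ, vel q σ s * pd f σ (q s)) s := by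
  rw [← fderiv_apply_eq_sum_pd]
  exact hf.hasFDerivAt.comp_hasDerivAt s (hasDerivAt_pi.mpr fun σ => (hq σ).hasDerivAt)

theorem chetaev_power_balance (v a g : Fin 4 → ℝ) (F : Fin 4 → Fin 4 → ℝ) (lam m : ℝ)
    (hpos : 0 < m + ∑ p : Fin 3, v p.castSucc ^ 2)
    (hcon : v 3 = √(m + ∑ p : Fin 3, v p.castSucc ^ 2))
    (h1 : ∀ l : Fin 3, -a l.castSucc + (∑ σ, v σ * (F σ l.castSucc - F l.castSucc σ))
        - g l.castSucc = -(lam * v l.castSucc) / √(m + ∑ p : Fin 3, v p.castSucc ^ 2))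
    (h2 : a 3 + (∑ σ, v σ * (F σ 3 - F 3 σ)) - g 3 = lam) :
    v 3 * a 3 - ∑ p : Fin 3, v p.castSucc * a p.castSucc - ∑ σ, v σ * g σ
      = lam * m / √(m + ∑ p : Fin 3, v p.castSucc ^ 2) := by
  set r := √(m + ∑ p : Fin 3, v p.castSucc ^ 2)
  have hr : 0 < r := Real.sqrt_pos.2 hpos
  have hr2 : r ^ 2 = m + ∑ p : Fin 3, v p.castSucc ^ 2 := Real.sq_sqrt hpos.le
  have h1' : ∀ l : Fin 3, r * (-a l.castSucc + (∑ σ, v σ * (F σ l.castSucc - F l.castSucc σ))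
      - g l.castSucc) = -(lam * v l.castSucc) := fun l => by
    rw [h1 l]
    field_simp
  have e0 := h1' 0
  have e1 := h1' 1
  have e2 := h1' 2
  simp only [Fin.sum_univ_four, Fin.sum_univ_three, Fin.castSucc_zero, Fin.castSucc_one,
    show (2 : Fin 3).castSucc = 2 from rfl, hcon] at e0 e1 e2 h2 hr2 ⊢
  rw [eq_div_iff hr.ne']
  linear_combination v 0 * e0 + v 1 * e1 + v 2 * e2 + r ^ 2 * h2 + lam * hr2

theorem hasDerivAt_half_minkowskiNormSq_vel_sub_comp {f : (Fin 4 → ℝ) → ℝ}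
    {q : ℝ → Fin 4 → ℝ} {s : ℝ} (hf : DifferentiableAt ℝ f (q s))
    (hq1 : ∀ σ, DifferentiableAt ℝ (fun τ => q τ σ) s) (hq2 : ∀ σ, DifferentiableAt ℝ (vel q σ) s) :
    HasDerivAt (fun τ => (1 / 2) * minkowskiNormSq (fun σ => vel q σ τ) - f (q τ))
      (vel q 3 s * acc q 3 s - ∑ p : Fin 3, vel q p.castSucc s * acc q p.castSucc s
        - ∑ σ, vel q σ s * pd f σ (q s)) s := by
  refine (((hasDerivAt_minkowskiNormSq fun σ => (hq2 σ).hasDerivAt).const_mul (1 / 2)).fun_sub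
    (hasDerivAt_comp_eq_sum_vel_mul_pd hf hq1)).congr_deriv ?_
  simp only [acc]
  ring

theorem stmt4_general (c : ℝ) (hc : 0 < c)
    (M : (Fin 4 → ℝ) → ℝ) (φ : Fin 4 → (Fin 4 → ℝ) → ℝ) (ψ : (Fin 4 → ℝ) → ℝ)
    (hψ : ContDiff ℝ 1 ψ)
    (q : ℝ → Fin 4 → ℝ) (lam : ℝ → ℝ)
    (hq1 : ∀ σ, Differentiable ℝ fun s => q s σ)
    (hq2 : ∀ σ, Differentiable ℝ (vel q σ))
    (hpos : ∀ s, 0 < M (q s) * c ^ 2 + ∑ p : Fin 3, vel q p.castSucc s ^ 2)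
    (hcon : ∀ s, vel q 3 s =
      Real.sqrt (M (q s) * c ^ 2 + ∑ p : Fin 3, vel q p.castSucc s ^ 2))
    (hchet1 : ∀ s, ∀ l : Fin 3,
      -acc q l.castSucc s
        + (∑ σ, vel q σ s * (pd (φ σ) l.castSucc (q s) - pd (φ l.castSucc) σ (q s)))
        - pd ψ l.castSucc (q s)
      = -(lam s * vel q l.castSucc s)
          / Real.sqrt (M (q s) * c ^ 2 + ∑ p : Fin 3, vel q p.castSucc s ^ 2))
    (hchet2 : ∀ s,
      acc q 3 s + (∑ σ, vel q σ s * (pd (φ σ) 3 (q s) - pd (φ 3) σ (q s)))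
        - pd ψ 3 (q s) = lam s) :
    (∀ s, deriv (fun τ => (1 / 2) * M (q τ) * c ^ 2 - ψ (q τ)) s =
        lam s * (M (q s) * c ^ 2)
          / Real.sqrt (M (q s) * c ^ 2 + ∑ p : Fin 3, vel q p.castSucc s ^ 2)) ∧
      ((∀ s, M (q s) ≠ 0) → ∀ s,
        lam s =
          Real.sqrt (M (q s) * c ^ 2 + ∑ p : Fin 3, vel q p.castSucc s ^ 2)
              / (M (q s) * c ^ 2)
            * deriv (fun τ => (1 / 2) * M (q τ) * c ^ 2 - ψ (q τ)) s) := by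
  have balance : ∀ s, deriv (fun τ => (1 / 2) * M (q τ) * c ^ 2 - ψ (q τ)) s =
      lam s * (M (q s) * c ^ 2)
        / √(M (q s) * c ^ 2 + ∑ p : Fin 3, vel q p.castSucc s ^ 2) := by
    intro s
    have hconstraint : (fun τ => (1 / 2) * M (q τ) * c ^ 2 - ψ (q τ))
        = fun τ => (1 / 2) * minkowskiNormSq (fun σ => vel q σ τ) - ψ (q τ) := by
      funext τ
      rw [minkowskiNormSq_eq_of_eq_sqrt (hpos τ).le (hcon τ)]
      ring
    rw [hconstraint, (hasDerivAt_half_minkowskiNormSq_vel_sub_comp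
      (hψ.differentiable one_ne_zero (q s)) (hq1 · s) (hq2 · s)).deriv]
    exact chetaev_power_balance (fun σ => vel q σ s) (fun σ => acc q σ s)
      (fun σ => pd ψ σ (q s)) (fun σ l => pd (φ σ) l (q s)) (lam s) _ (hpos s) (hcon s)
      (hchet1 s) (hchet2 s)
  refine ⟨balance, fun hM s => ?_⟩
  have hMc : M (q s) * c ^ 2 ≠ 0 := mul_ne_zero (hM s) (pow_ne_zero 2 hc.ne')
  have hr : √(M (q s) * c ^ 2 + ∑ p : Fin 3, vel q p.castSucc s ^ 2) ≠ 0 :=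
    (Real.sqrt_pos.2 (hpos s)).ne'
  rw [balance s, eq_comm, div_mul_div_comm, div_eq_iff (mul_ne_zero hMc hr)]
  ring

/-- along solutions of the Chetaev equations lying in the constraint
`q̇⁴ = √(M(q)c² + Σ_p(q̇^p)²)` one has
`(d/ds)[½M(q)c² − ψ(q)] = λ·M(q)c²/√(M(q)c² + Σ_p(q̇^p)²)`;
consequently, if `M(q(s)) ≠ 0` for all `s`, the multiplier `λ` is determined. -/
theorem stmt4 (c : ℝ) (hc : 0 < c)
    (M : (Fin 4 → ℝ) → ℝ) (φ : Fin 4 → (Fin 4 → ℝ) → ℝ) (ψ : (Fin 4 → ℝ) → ℝ)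
    (hM : ContDiff ℝ 1 M) (hφ : ∀ σ, ContDiff ℝ 1 (φ σ)) (hψ : ContDiff ℝ 1 ψ)
    (q : ℝ → Fin 4 → ℝ) (lam : ℝ → ℝ)
    (hq1 : ∀ σ, Differentiable ℝ fun s => q s σ)
    (hq2 : ∀ σ, Differentiable ℝ (vel q σ))
    (hpos : ∀ s, 0 < M (q s) * c ^ 2 + ∑ p : Fin 3, vel q p.castSucc s ^ 2)
    (hcon : ∀ s, vel q 3 s =
      Real.sqrt (M (q s) * c ^ 2 + ∑ p : Fin 3, vel q p.castSucc s ^ 2))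
    (hchet1 : ∀ s, ∀ l : Fin 3,
      -acc q l.castSucc s
        + (∑ σ, vel q σ s * (pd (φ σ) l.castSucc (q s) - pd (φ l.castSucc) σ (q s)))
        - pd ψ l.castSucc (q s)
      = -(lam s * vel q l.castSucc s)
          / Real.sqrt (M (q s) * c ^ 2 + ∑ p : Fin 3, vel q p.castSucc s ^ 2))
    (hchet2 : ∀ s,
      acc q 3 s + (∑ σ, vel q σ s * (pd (φ σ) 3 (q s) - pd (φ 3) σ (q s)))
        - pd ψ 3 (q s) = lam s) :
    (∀ s, deriv (fun τ => (1 / 2) * M (q τ) * c ^ 2 - ψ (q τ)) s =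
        lam s * (M (q s) * c ^ 2)
          / Real.sqrt (M (q s) * c ^ 2 + ∑ p : Fin 3, vel q p.castSucc s ^ 2)) ∧
      ((∀ s, M (q s) ≠ 0) → ∀ s,
        lam s =
          Real.sqrt (M (q s) * c ^ 2 + ∑ p : Fin 3, vel q p.castSucc s ^ 2)
              / (M (q s) * c ^ 2)
            * deriv (fun τ => (1 / 2) * M (q τ) * c ^ 2 - ψ (q τ)) s) :=
  stmt4_general c hc M φ ψ hψ q lam hq1 hq2 hpos hcon hchet1 hchet2
end

section
/- Let c > 0, e ∈ ℝ, m₀ > 0, let A : ℝ × ℝ³ → ℝ³ and V, ψ : ℝ × ℝ³ → ℝ be C¹ fields, and set φ_l(t,x) = (e/c)A^l(t,x) for l = 1,2,3 and φ_4(t,x) = −(e/c)V(t,x). Let r : ℝ → ℝ³ be a twice differentiable curve with |dr/dt| < c everywhere, write v = dr/dt and γ(t) = 1/√(1 − |v(t)|²/c²), and let t : ℝ → ℝ be a twice differentiable function satisfying the mass equation dt/ds = m₀γ(t(s)). Define the curve q : ℝ → ℝ⁴ by q(s) = (r(t(s)), c·t(s)). Then q automatically satisfies the constraint q̇⁴(s)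 = √(m₀²c² + Σ_{p=1}^{3}(q̇^p(s))²), and q satisfies, for all s and j = 1,2,3, the reduced equations q̈^j = Σ_l q̇^l(∂φ_l/∂q^j − ∂φ_j/∂q^l) + √(m₀²c² + Σ_p(q̇^p)²)(∂φ_4/∂q^j − ∂φ_j/∂q⁴) − ∂ψ/∂q^j − (q̇^j/(m₀²c²))(Σ_l q̇^l ∂ψ/∂q^l + √(m₀²c² + Σ_p(q̇^p)²)·∂ψ/∂q⁴) if and only if r satisfies, for all t in the range of t(s), the three-dimensional equations of motion (d/dt)(m₀ γ v) = F_L + F_C − (1/m₀)√(1 − v²/c²)·grad ψ, where F_L(t) = e((1/c) v × curl A − (1/c)∂A/∂t − grad V) evaluated at (t, r(t)), grad denotes the spatial gradient, and F_C(t) = −(1/(m₀c²)) γ v (dψ/dt) with dψ/dt = ⟨v, grad ψ⟩ + ∂ψ/∂t evaluated along the curve. -/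
/-
With the mass equation `dt/ds = m₀γ`, the chain rule gives `dq^l/ds = m₀γ v^l` and
`dq⁴/ds = m₀γ c`, so the constraint reduces to `m₀²γ²(c² − |v|²) = m₀²c²`. Differentiating once
more, `q̈^j = m₀γ · d(m₀γ v^j)/dt`, while substituting `φ` in terms of `A` and `V` shows that the
right-hand side of the reduced equation is `m₀γ` times `F_L + F_C − (1/m₀)√(1 − v²/c²) grad ψ`.
Cancelling the nonzero factor `m₀γ` gives the equivalence.
-/

/-- Spatial partial derivative `∂f/∂x^i` of a field on `ℝ × ℝ³`. -/
noncomputable def pdx (f : ℝ × (Fin 3 → ℝ) → ℝ) (i : Fin 3) (t : ℝ) (x : Fin 3 → ℝ) : ℝ :=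
  fderiv ℝ (fun y => f (t, y)) x (Pi.single i 1)

/-- Time partial derivative `∂f/∂t` of a field on `ℝ × ℝ³`. -/
noncomputable def pdt (f : ℝ × (Fin 3 → ℝ) → ℝ) (t : ℝ) (x : Fin 3 → ℝ) : ℝ :=
  deriv (fun τ => f (τ, x)) t

/-- Cross product on `ℝ³`. -/
def cross (u v : Fin 3 → ℝ) : Fin 3 → ℝ :=
  ![u 1 * v 2 - u 2 * v 1, u 2 * v 0 - u 0 * v 2, u 0 * v 1 - u 1 * v 0]

/-- Curl of a time-dependent vector field on `ℝ³`. -/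
noncomputable def curl (A : Fin 3 → ℝ × (Fin 3 → ℝ) → ℝ) (t : ℝ) (x : Fin 3 → ℝ) :
    Fin 3 → ℝ :=
  ![pdx (A 2) 1 t x - pdx (A 1) 2 t x,
    pdx (A 0) 2 t x - pdx (A 2) 0 t x,
    pdx (A 1) 0 t x - pdx (A 0) 1 t x]

/-- Component `l` of the velocity of a curve in `ℝ³`. -/
noncomputable def v3 (r : ℝ → Fin 3 → ℝ) (l : Fin 3) (t : ℝ) : ℝ :=
  deriv (fun τ => r τ l) t

open Finset

lemma one_sub_div_sq_pos_of_sqrt_lt {a c : ℝ} (h : √a < c) : 0 < 1 - a / c ^ 2 := by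
  have hc : 0 < c := (Real.sqrt_nonneg a).trans_lt h
  rw [sub_pos, div_lt_one (by positivity)]
  exact (Real.sqrt_lt' hc).1 h

lemma sqrt_mass_shell {ι : Type*} [Fintype ι] {m c k : ℝ} (hm : 0 ≤ m) (hc : 0 < c)
    {w : ι → ℝ} (hw : 0 < 1 - (∑ p, w p ^ 2) / c ^ 2)
    (hk : k = m / √(1 - (∑ p, w p ^ 2) / c ^ 2)) :
    √(m ^ 2 * c ^ 2 + ∑ p, (k * w p) ^ 2) = c * k := by
  have hk2 : k ^ 2 * (1 - (∑ p, w p ^ 2) / c ^ 2) = m ^ 2 := by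
    rw [hk, div_pow, Real.sq_sqrt hw.le, div_mul_cancel₀ _ hw.ne']
  rw [← Real.sqrt_sq (by rw [hk]; positivity : 0 ≤ c * k), ← hk2]
  congr 1
  simp only [mul_pow, ← mul_sum]
  field_simp
  ring

lemma pdx_const_mul (a : ℝ) (f : ℝ × (Fin 3 → ℝ) → ℝ) (i : Fin 3) (t : ℝ) (x : Fin 3 → ℝ) :
    pdx (fun p => a * f p) i t x = a * pdx f i t x := by
  change fderiv ℝ (a • fun y => f (t, y)) x _ = _
  rw [fderiv_const_smul_field]
  rfl

lemma pdt_const_mul (a : ℝ) (f : ℝ × (Fin 3 → ℝ) → ℝ) (t : ℝ) (x : Fin 3 → ℝ) :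
    pdt (fun p => a * f p) t x = a * pdt f t x :=
  deriv_const_mul_field a

lemma cross_curl_eq (A : Fin 3 → ℝ × (Fin 3 → ℝ) → ℝ) (t : ℝ) (x v : Fin 3 → ℝ) (j : Fin 3) :
    cross v (curl A t x) j = ∑ l, v l * (pdx (A l) j t x - pdx (A j) l t x) := by
  fin_cases j <;> simp [cross, curl, Fin.sum_univ_three] <;> ring

/- `v` is the 3-velocity, `a l j = ∂A_l/∂x^j`, `b = ∂V/∂x^j`, `At = ∂A_j/∂t`, `Dψ` and `ψt` the
derivatives of `ψ`, and `k = m₀γ = dt/ds`. -/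
lemma reducedForce_eq_mul {ι : Type*} [Fintype ι] {m c e g k : ℝ} (hm : m ≠ 0) (hc : c ≠ 0)
    (hg : g ≠ 0) (hk : k = m / g) (v Dψ : ι → ℝ) (a : ι → ι → ℝ) (b At ψt : ℝ) (j : ι) :
    ∑ x, k * v x * (e / c * a x j - e / c * a j x)
        + c * k * (-(e / c) * b - 1 / c * (e / c * At)) - Dψ j
        - k * v j / (m ^ 2 * c ^ 2) * (∑ x, k * v x * Dψ x + c * k * (1 / c * ψt)) =
      k * (e * (1 / c * ∑ l, v l * (a l j - a j l) - 1 / c * At - b)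
        + -(1 / (m * c ^ 2)) * (1 / g) * v j * (∑ p, v p * Dψ p + ψt)
        - 1 / m * g * Dψ j) := by
  have hsumA : ∑ x, k * v x * (e / c * a x j - e / c * a j x)
      = k * (e / c) * ∑ x, v x * (a x j - a j x) := by
    rw [mul_sum]; exact sum_congr rfl fun x _ => by ring
  have hsumψ : ∑ x, k * v x * Dψ x = k * ∑ x, v x * Dψ x := by
    rw [mul_sum]; exact sum_congr rfl fun x _ => by ring
  rw [hsumA, hsumψ, hk]
  field_simp
  ring

noncomputable def relMomentum (m₀ c : ℝ) (r : ℝ → Fin 3 → ℝ) (l : Fin 3) (t : ℝ) : ℝ :=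
  m₀ * v3 r l t / √(1 - (∑ p, v3 r p t ^ 2) / c ^ 2)

lemma differentiableAt_relMomentum {m₀ c t : ℝ} {r : ℝ → Fin 3 → ℝ}
    (hr : ∀ p, DifferentiableAt ℝ (v3 r p) t) (h : 0 < 1 - (∑ p, v3 r p t ^ 2) / c ^ 2)
    (l : Fin 3) : DifferentiableAt ℝ (relMomentum m₀ c r l) t := by
  have hsum : DifferentiableAt ℝ (fun τ => 1 - (∑ p, v3 r p τ ^ 2) / c ^ 2) t := by
    fun_prop
  exact ((hr l).const_mul m₀).div (hsum.sqrt h.ne') (Real.sqrt_pos.2 h).ne'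

section SnocCurve

variable {c : ℝ} {r : ℝ → Fin 3 → ℝ} {T : ℝ → ℝ} {q : ℝ → Fin 4 → ℝ} {s : ℝ}

lemma vel_castSucc_of_snoc (hq : ∀ s, q s = Fin.snoc (r (T s)) (c * T s)) {l : Fin 3}
    (hr : DifferentiableAt ℝ (fun t => r t l) (T s)) (hT : DifferentiableAt ℝ T s) :
    vel q l.castSucc s = v3 r l (T s) * deriv T s := by
  have : (fun τ => q τ l.castSucc) = (fun t => r t l) ∘ T := by
    funext τ; rw [hq τ]; exact Fin.snoc_castSucc _ _ _
  rw [vel, this, deriv_comp s hr hT, v3]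

lemma vel_last_of_snoc (hq : ∀ s, q s = Fin.snoc (r (T s)) (c * T s))
    (hT : DifferentiableAt ℝ T s) : vel q 3 s = c * deriv T s := by
  have : (fun τ => q τ 3) = fun τ => c * T τ := by
    funext τ; rw [hq τ]; exact Fin.snoc_last _ _
  rw [vel, this, deriv_const_mul c hT]

lemma acc_castSucc_of_snoc {m₀ : ℝ} (hq : ∀ s, q s = Fin.snoc (r (T s)) (c * T s))
    (hr1 : ∀ l, Differentiable ℝ fun t => r t l) (hr2 : ∀ l, Differentiable ℝ (v3 r l))
    (hT : Differentiable ℝ T)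
    (hmass : ∀ s, deriv T s = m₀ / √(1 - (∑ p, v3 r p (T s) ^ 2) / c ^ 2))
    (hpos : 0 < 1 - (∑ p, v3 r p (T s) ^ 2) / c ^ 2) (j : Fin 3) :
    acc q j.castSucc s = deriv T s * deriv (relMomentum m₀ c r j) (T s) := by
  have hcomp : vel q j.castSucc = relMomentum m₀ c r j ∘ T := funext fun s => by
    rw [vel_castSucc_of_snoc hq (hr1 j _) (hT s), hmass, Function.comp, relMomentum]
    ring
  rw [acc, hcomp, mul_comm,
    deriv_comp s (differentiableAt_relMomentum (fun p => hr2 p _) hpos j) (hT s)]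

end SnocCurve

theorem stmt6_general (c e m₀ : ℝ) (hc : 0 < c) (hm : 0 < m₀)
    (A : Fin 3 → ℝ × (Fin 3 → ℝ) → ℝ) (V ψ : ℝ × (Fin 3 → ℝ) → ℝ)
    (φ : Fin 4 → ℝ × (Fin 3 → ℝ) → ℝ)
    (hφl : ∀ l : Fin 3, ∀ p, φ l.castSucc p = e / c * A l p)
    (hφ4 : ∀ p, φ 3 p = -(e / c) * V p)
    (r : ℝ → Fin 3 → ℝ)
    (hr1 : ∀ l, Differentiable ℝ fun t => r t l)
    (hr2 : ∀ l, Differentiable ℝ (v3 r l))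
    (hsub : ∀ t, Real.sqrt (∑ p, v3 r p t ^ 2) < c)
    (T : ℝ → ℝ) (hT1 : Differentiable ℝ T)
    (hmass : ∀ s, deriv T s =
      m₀ / Real.sqrt (1 - (∑ p, v3 r p (T s) ^ 2) / c ^ 2))
    (q : ℝ → Fin 4 → ℝ)
    (hq : ∀ s, q s = Fin.snoc (r (T s)) (c * T s)) :
    (∀ s, vel q 3 s =
        Real.sqrt (m₀ ^ 2 * c ^ 2 + ∑ p : Fin 3, vel q p.castSucc s ^ 2)) ∧
    ((∀ s, ∀ j : Fin 3,
        acc q j.castSucc s =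
          (∑ l : Fin 3, vel q l.castSucc s *
              (pdx (φ l.castSucc) j (T s) (r (T s))
                - pdx (φ j.castSucc) l (T s) (r (T s))))
            + Real.sqrt (m₀ ^ 2 * c ^ 2 + ∑ p : Fin 3, vel q p.castSucc s ^ 2) *
                (pdx (φ 3) j (T s) (r (T s))
                  - (1 / c) * pdt (φ j.castSucc) (T s) (r (T s)))
            - pdx ψ j (T s) (r (T s))
            - vel q j.castSucc s / (m₀ ^ 2 * c ^ 2) *
                ((∑ l : Fin 3, vel q l.castSucc s * pdx ψ l (T s) (r (T s)))
                  + Real.sqrt (m₀ ^ 2 * c ^ 2 + ∑ p : Fin 3, vel q p.castSucc s ^ 2) *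
                      ((1 / c) * pdt ψ (T s) (r (T s)))))
      ↔
      (∀ t ∈ Set.range T, ∀ l : Fin 3,
        deriv (fun τ => m₀ * v3 r l τ /
            Real.sqrt (1 - (∑ p, v3 r p τ ^ 2) / c ^ 2)) t =
          e * ((1 / c) * cross (fun i => v3 r i t) (curl A t (r t)) l
              - (1 / c) * pdt (A l) t (r t) - pdx V l t (r t))
          + (-(1 / (m₀ * c ^ 2)) *
              (1 / Real.sqrt (1 - (∑ p, v3 r p t ^ 2) / c ^ 2)) * v3 r l t *
              ((∑ p, v3 r p t * pdx ψ p t (r t)) + pdt ψ t (r t)))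
          - (1 / m₀) * Real.sqrt (1 - (∑ p, v3 r p t ^ 2) / c ^ 2) *
              pdx ψ l t (r t))) := by
  have hpos : ∀ t, 0 < 1 - (∑ p, v3 r p t ^ 2) / c ^ 2 :=
    fun t => one_sub_div_sq_pos_of_sqrt_lt (hsub t)
  have hγ : ∀ t, √(1 - (∑ p, v3 r p t ^ 2) / c ^ 2) ≠ 0 := fun t => (Real.sqrt_pos.2 (hpos t)).ne'
  have hvel : ∀ s l, vel q l.castSucc s = deriv T s * v3 r l (T s) := fun s l => by
    rw [vel_castSucc_of_snoc hq (hr1 l _) (hT1 s), mul_comm]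
  have hshell : ∀ s, √(m₀ ^ 2 * c ^ 2 + ∑ p : Fin 3, vel q p.castSucc s ^ 2) = c * deriv T s :=
    fun s => by simpa only [hvel] using sqrt_mass_shell hm.le hc (hpos _) (hmass s)
  have hφA : ∀ l, φ l.castSucc = fun p => e / c * A l p := fun l => funext (hφl l)
  have hφV : φ 3 = fun p => -(e / c) * V p := funext hφ4
  refine ⟨fun s => by rw [vel_last_of_snoc hq (hT1 s), hshell], ?_⟩
  rw [Set.forall_mem_range]
  refine forall_congr' fun s => forall_congr' fun j => ?_
  have hk : deriv T s ≠ 0 := by rw [hmass]; exact div_ne_zero hm.ne' (hγ _)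
  rw [acc_castSucc_of_snoc hq hr1 hr2 hT1 hmass (hpos _), hshell]
  simp only [hvel, hφA, hφV, pdx_const_mul, pdt_const_mul, cross_curl_eq]
  rw [reducedForce_eq_mul hm.ne' hc.ne' (hγ _) (hmass s) (fun l => v3 r l (T s))
      (fun l => pdx ψ l (T s) (r (T s))) (fun l i => pdx (A l) i (T s) (r (T s))),
    mul_right_inj' hk]
  rfl

/-- for a particle with positive square of mass `m₀² > 0`, under the
mass equation `dt/ds = m₀γ`, the curve `q(s) = (r(t(s)), c·t(s))` automatically
satisfies the constraint, and the reduced (four-dimensional) equations of motion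
hold iff the three-dimensional equations
`(d/dt)(m₀γv) = F_L + F_C − (1/m₀)√(1−v²/c²)·grad ψ` hold. -/
theorem stmt6 (c e m₀ : ℝ) (hc : 0 < c) (hm : 0 < m₀)
    (A : Fin 3 → ℝ × (Fin 3 → ℝ) → ℝ) (V ψ : ℝ × (Fin 3 → ℝ) → ℝ)
    (hA : ∀ l, ContDiff ℝ 1 (A l)) (hV : ContDiff ℝ 1 V) (hψ : ContDiff ℝ 1 ψ)
    (φ : Fin 4 → ℝ × (Fin 3 → ℝ) → ℝ)
    (hφl : ∀ l : Fin 3, ∀ p, φ l.castSucc p = e / c * A l p)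
    (hφ4 : ∀ p, φ 3 p = -(e / c) * V p)
    (r : ℝ → Fin 3 → ℝ)
    (hr1 : ∀ l, Differentiable ℝ fun t => r t l)
    (hr2 : ∀ l, Differentiable ℝ (v3 r l))
    (hsub : ∀ t, Real.sqrt (∑ p, v3 r p t ^ 2) < c)
    (T : ℝ → ℝ) (hT1 : Differentiable ℝ T) (hT2 : Differentiable ℝ (deriv T))
    (hmass : ∀ s, deriv T s =
      m₀ / Real.sqrt (1 - (∑ p, v3 r p (T s) ^ 2) / c ^ 2))
    (q : ℝ → Fin 4 → ℝ)
    (hq : ∀ s, q s = Fin.snoc (r (T s)) (c * T s)) :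
    (∀ s, vel q 3 s =
        Real.sqrt (m₀ ^ 2 * c ^ 2 + ∑ p : Fin 3, vel q p.castSucc s ^ 2)) ∧
    ((∀ s, ∀ j : Fin 3,
        acc q j.castSucc s =
          (∑ l : Fin 3, vel q l.castSucc s *
              (pdx (φ l.castSucc) j (T s) (r (T s))
                - pdx (φ j.castSucc) l (T s) (r (T s))))
            + Real.sqrt (m₀ ^ 2 * c ^ 2 + ∑ p : Fin 3, vel q p.castSucc s ^ 2) *
                (pdx (φ 3) j (T s) (r (T s))
                  - (1 / c) * pdt (φ j.castSucc) (T s) (r (T s)))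
            - pdx ψ j (T s) (r (T s))
            - vel q j.castSucc s / (m₀ ^ 2 * c ^ 2) *
                ((∑ l : Fin 3, vel q l.castSucc s * pdx ψ l (T s) (r (T s)))
                  + Real.sqrt (m₀ ^ 2 * c ^ 2 + ∑ p : Fin 3, vel q p.castSucc s ^ 2) *
                      ((1 / c) * pdt ψ (T s) (r (T s)))))
      ↔
      (∀ t ∈ Set.range T, ∀ l : Fin 3,
        deriv (fun τ => m₀ * v3 r l τ /
            Real.sqrt (1 - (∑ p, v3 r p τ ^ 2) / c ^ 2)) t =
          e * ((1 / c) * cross (fun i => v3 r i t) (curl A t (r t)) l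
              - (1 / c) * pdt (A l) t (r t) - pdx V l t (r t))
          + (-(1 / (m₀ * c ^ 2)) *
              (1 / Real.sqrt (1 - (∑ p, v3 r p t ^ 2) / c ^ 2)) * v3 r l t *
              ((∑ p, v3 r p t * pdx ψ p t (r t)) + pdt ψ t (r t)))
          - (1 / m₀) * Real.sqrt (1 - (∑ p, v3 r p t ^ 2) / c ^ 2) *
              pdx ψ l t (r t))) :=
  stmt6_general c e m₀ hc hm A V ψ φ hφl hφ4 r hr1 hr2 hsub T hT1 hmass q hq
end

section
/- Let c > 0, e ∈ ℝ, m₀ > 0, and let A : ℝ × ℝ³ → ℝ³ and V : ℝ × ℝ³ → ℝ be C¹ fields. Define the Lagrange function ℒ(t, x, v) = m₀c²√(|v|²/c² − 1) + (e/c)⟨A(t,x), v⟩ − eV(t,x) on the region |v| > c. Then a twice differentiable curve r : ℝ → ℝ³ with |dr/dt| > c everywhere satisfies the Euler–Lagrange equations ∂ℒ/∂x^l(t, r(t), r'(t)) − (d/dt)[∂ℒ/∂v^l(t, r(t), r'(t))] = 0 for l = 1,2,3 if and only if it satisfies (d/dt)(m₀ r'(t)/√(|r'(t)|²/c² − 1))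 = e((1/c) r'(t) × (curl A)(t,r(t)) − (1/c)(∂A/∂t)(t,r(t)) − (grad V)(t,r(t))) for all t. -/
/-- Partial derivative of `ℒ(t,x,v)` in the `l`-th position slot. -/
noncomputable def pdX (L : ℝ → (Fin 3 → ℝ) → (Fin 3 → ℝ) → ℝ) (l : Fin 3)
    (t : ℝ) (x v : Fin 3 → ℝ) : ℝ :=
  fderiv ℝ (fun y => L t y v) x (Pi.single l 1)

/-- Partial derivative of `ℒ(t,x,v)` in the `l`-th velocity slot. -/
noncomputable def pdV (L : ℝ → (Fin 3 → ℝ) → (Fin 3 → ℝ) → ℝ) (l : Fin 3)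
    (t : ℝ) (x v : Fin 3 → ℝ) : ℝ :=
  fderiv ℝ (fun w => L t x w) v (Pi.single l 1)

/-!
Along the curve, `∂ℒ/∂v^l = m₀ v^l / √(|v|²/c² − 1) + (e/c) A_l(t, r)`, and the chain rule gives
`d/dt A_l(t, r(t)) = ∂_t A_l + ∑_j ∂_j A_l ṙ^j`, while `∂ℒ/∂x^l = (e/c) ∑_i ṙ^i ∂_l A_i − e ∂_l V`.
So the Euler–Lagrange residual is the Lorentz force minus the time derivative of the momentum,
the magnetic terms combining through `(ṙ × curl A)_l = ∑_i ṙ^i (∂_l A_i − ∂_i A_l)`.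
-/

open ContinuousLinearMap

section PiCalculus

variable {ι : Type*} [Fintype ι]

lemma hasFDerivAt_sum_sq (v : ι → ℝ) :
    HasFDerivAt (fun w : ι → ℝ => ∑ i, w i ^ 2) (∑ i, (2 * v i) • (proj i : (ι → ℝ) →L[ℝ] ℝ)) v :=
  HasFDerivAt.fun_sum fun i _ => by simpa using (hasFDerivAt_apply (𝕜 := ℝ) i v).pow 2

lemma hasFDerivAt_sum_mul (a v : ι → ℝ) :
    HasFDerivAt (fun w : ι → ℝ => ∑ i, a i * w i) (∑ i, a i • (proj i : (ι → ℝ) →L[ℝ] ℝ)) v :=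
  HasFDerivAt.fun_sum fun i _ => (hasFDerivAt_apply (𝕜 := ℝ) i v).const_mul (a i)

variable [DecidableEq ι]

lemma sum_smul_proj_apply_single (a : ι → ℝ) (l : ι) :
    (∑ i, a i • proj i : (ι → ℝ) →L[ℝ] ℝ) (Pi.single l 1) = a l := by
  simp [Pi.single_apply]

lemma apply_eq_sum_apply_single_mul (φ : (ι → ℝ) →L[ℝ] ℝ) (w : ι → ℝ) :
    φ w = ∑ j, φ (Pi.single j 1) * w j := by
  conv_lhs => rw [pi_eq_sum_univ' w]
  simp [map_sum, mul_comm]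

end PiCalculus

section Fields

variable {f : ℝ × (Fin 3 → ℝ) → ℝ} {t : ℝ} {x : Fin 3 → ℝ}

lemma pdx_eq_fderiv_inr (hf : DifferentiableAt ℝ f (t, x)) (i : Fin 3) :
    pdx f i t x = (fderiv ℝ f (t, x) ∘L inr ℝ ℝ (Fin 3 → ℝ)) (Pi.single i 1) :=
  congrArg (· (Pi.single i 1)) (hf.hasFDerivAt.comp x (hasFDerivAt_prodMk_right t x)).fderiv

lemma pdt_eq_fderiv_inl (hf : DifferentiableAt ℝ f (t, x)) :
    pdt f t x = fderiv ℝ f (t, x) (1, 0) :=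
  (hf.hasFDerivAt.comp_hasDerivAt t ((hasDerivAt_id t).prodMk (hasDerivAt_const t x))).deriv

lemma hasDerivAt_comp_curve {r : ℝ → Fin 3 → ℝ} (hf : DifferentiableAt ℝ f (t, r t))
    (hr : ∀ j, DifferentiableAt ℝ (fun τ => r τ j) t) :
    HasDerivAt (fun τ => f (τ, r τ)) (pdt f t (r t) + ∑ j, pdx f j t (r t) * v3 r j t) t := by
  have hcurve : HasDerivAt (fun τ => (τ, r τ)) ((1 : ℝ), fun j => v3 r j t) t :=
    (hasDerivAt_id t).prodMk (hasDerivAt_pi.2 fun j => (hr j).hasDerivAt)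
  refine (hf.hasFDerivAt.comp_hasDerivAt t hcurve).congr_deriv ?_
  have hsplit : ((1 : ℝ), fun j => v3 r j t)
      = ((1 : ℝ), (0 : Fin 3 → ℝ)) + (0, fun j => v3 r j t) := by
    simp
  rw [hsplit, map_add, pdt_eq_fderiv_inl hf]
  congr 1
  simpa only [comp_apply, inr_apply, pdx_eq_fderiv_inr hf] using
    apply_eq_sum_apply_single_mul (fderiv ℝ f (t, r t) ∘L inr ℝ ℝ (Fin 3 → ℝ)) (fun j => v3 r j t)

lemma cross_curl (A : Fin 3 → ℝ × (Fin 3 → ℝ) → ℝ) (t : ℝ) (x v : Fin 3 → ℝ) (l : Fin 3) :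
    cross v (curl A t x) l = ∑ i, v i * (pdx (A i) l t x - pdx (A l) i t x) := by
  fin_cases l <;>
    simp [cross, curl, Fin.sum_univ_three] <;>
    ring

end Fields

noncomputable def tachyonLagrangian (c e m₀ : ℝ) (A : Fin 3 → ℝ × (Fin 3 → ℝ) → ℝ)
    (V : ℝ × (Fin 3 → ℝ) → ℝ) (t : ℝ) (x v : Fin 3 → ℝ) : ℝ :=
  m₀ * c ^ 2 * Real.sqrt ((∑ i, v i ^ 2) / c ^ 2 - 1)
    + (e / c) * (∑ i, A i (t, x) * v i) - e * V (t, x)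

section Lagrangian

variable {c e m₀ : ℝ} {A : Fin 3 → ℝ × (Fin 3 → ℝ) → ℝ} {V : ℝ × (Fin 3 → ℝ) → ℝ}

lemma pdV_tachyonLagrangian {t : ℝ} {x v : Fin 3 → ℝ} (hv : 0 < (∑ i, v i ^ 2) / c ^ 2 - 1)
    (l : Fin 3) :
    pdV (tachyonLagrangian c e m₀ A V) l t x v
      = m₀ * v l / Real.sqrt ((∑ i, v i ^ 2) / c ^ 2 - 1) + (e / c) * A l (t, x) := by
  have hc : c ≠ 0 := by rintro rfl; norm_num at hv
  have hQ : HasFDerivAt (fun w : Fin 3 → ℝ => (∑ i, w i ^ 2) / c ^ 2 - 1)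
      ((c ^ 2)⁻¹ • ∑ i, (2 * v i) • (proj i : (Fin 3 → ℝ) →L[ℝ] ℝ)) v := by
    simpa only [div_eq_inv_mul] using ((hasFDerivAt_sum_sq v).const_mul (c ^ 2)⁻¹).sub_const 1
  have hL : HasFDerivAt (tachyonLagrangian c e m₀ A V t x) _ v :=
    ((((Real.hasDerivAt_sqrt hv.ne').comp_hasFDerivAt v hQ).const_mul (m₀ * c ^ 2)).add
      ((hasFDerivAt_sum_mul (fun i => A i (t, x)) v).const_mul (e / c))).sub_const (e * V (t, x))
  rw [pdV, hL.fderiv]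
  simp only [add_apply, smul_apply, sum_smul_proj_apply_single, smul_eq_mul]
  field_simp

lemma pdX_tachyonLagrangian {t : ℝ} {x : Fin 3 → ℝ} (hA : ∀ i, DifferentiableAt ℝ (A i) (t, x))
    (hV : DifferentiableAt ℝ V (t, x)) (v : Fin 3 → ℝ) (l : Fin 3) :
    pdX (tachyonLagrangian c e m₀ A V) l t x v
      = (e / c) * ∑ i, v i * pdx (A i) l t x - e * pdx V l t x := by
  have hslice {f : ℝ × (Fin 3 → ℝ) → ℝ} (hf : DifferentiableAt ℝ f (t, x)) :=
    hf.hasFDerivAt.comp x (hasFDerivAt_prodMk_right t x)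
  have hL : HasFDerivAt (fun y => tachyonLagrangian c e m₀ A V t y v) _ x :=
    (((HasFDerivAt.fun_sum (u := Finset.univ) fun i _ => (hslice (hA i)).mul_const (v i)).const_mul
      (e / c)).const_add (m₀ * c ^ 2 * Real.sqrt ((∑ i, v i ^ 2) / c ^ 2 - 1))).sub
      ((hslice hV).const_mul e)
  rw [pdX, hL.fderiv]
  simp only [sub_apply, smul_apply, sum_apply, smul_eq_mul, ← pdx_eq_fderiv_inr (hA _),
    ← pdx_eq_fderiv_inr hV]

lemma pdX_sub_deriv_pdV_tachyonLagrangian {r : ℝ → Fin 3 → ℝ} {t : ℝ}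
    (hA : ∀ i, DifferentiableAt ℝ (A i) (t, r t)) (hV : DifferentiableAt ℝ V (t, r t))
    (hr : ∀ j, DifferentiableAt ℝ (fun τ => r τ j) t) (hvel : ∀ j, DifferentiableAt ℝ (v3 r j) t)
    (hsuper : ∀ τ, 0 < (∑ p, v3 r p τ ^ 2) / c ^ 2 - 1) (l : Fin 3) :
    pdX (tachyonLagrangian c e m₀ A V) l t (r t) (fun i => v3 r i t)
        - deriv (fun τ => pdV (tachyonLagrangian c e m₀ A V) l τ (r τ) (fun i => v3 r i τ)) t
      = e * ((1 / c) * cross (fun i => v3 r i t) (curl A t (r t)) l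
          - (1 / c) * pdt (A l) t (r t) - pdx V l t (r t))
        - deriv (fun τ => m₀ * v3 r l τ / Real.sqrt ((∑ p, v3 r p τ ^ 2) / c ^ 2 - 1)) t := by
  have hmomentum : DifferentiableAt ℝ
      (fun τ => m₀ * v3 r l τ / Real.sqrt ((∑ p, v3 r p τ ^ 2) / c ^ 2 - 1)) t :=
    ((hvel l).const_mul m₀).div
      (((DifferentiableAt.fun_sum fun p _ => (hvel p).pow 2).div_const _).sub_const 1 |>.sqrt
        (hsuper t).ne') (Real.sqrt_pos.2 (hsuper t)).ne'
  have hpdV : (fun τ => pdV (tachyonLagrangian c e m₀ A V) l τ (r τ) (fun i => v3 r i τ))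
      = fun τ => m₀ * v3 r l τ / Real.sqrt ((∑ p, v3 r p τ ^ 2) / c ^ 2 - 1)
          + (e / c) * A l (τ, r τ) :=
    funext fun τ => pdV_tachyonLagrangian (hsuper τ) l
  have hAl := (hasDerivAt_comp_curve (hA l) hr).const_mul (e / c)
  rw [hpdV, (hmomentum.hasDerivAt.fun_add hAl).deriv, pdX_tachyonLagrangian hA hV, cross_curl]
  simp only [Fin.sum_univ_three]
  ring

end Lagrangian

theorem stmt9_general (c e m₀ : ℝ) (hc : 0 < c)
    (A : Fin 3 → ℝ × (Fin 3 → ℝ) → ℝ) (V : ℝ × (Fin 3 → ℝ) → ℝ)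
    (hA : ∀ l, ContDiff ℝ 1 (A l)) (hV : ContDiff ℝ 1 V)
    (L : ℝ → (Fin 3 → ℝ) → (Fin 3 → ℝ) → ℝ)
    (hL : ∀ t x v, L t x v =
      m₀ * c ^ 2 * Real.sqrt ((∑ i, v i ^ 2) / c ^ 2 - 1)
        + (e / c) * (∑ i, A i (t, x) * v i) - e * V (t, x))
    (r : ℝ → Fin 3 → ℝ)
    (hr1 : ∀ l, Differentiable ℝ fun t => r t l)
    (hr2 : ∀ l, Differentiable ℝ (v3 r l))
    (hsup : ∀ t, c < Real.sqrt (∑ p, v3 r p t ^ 2)) :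
    (∀ t, ∀ l : Fin 3,
        pdX L l t (r t) (fun i => v3 r i t)
          - deriv (fun τ => pdV L l τ (r τ) (fun i => v3 r i τ)) t = 0)
    ↔
    (∀ t, ∀ l : Fin 3,
        deriv (fun τ => m₀ * v3 r l τ /
            Real.sqrt ((∑ p, v3 r p τ ^ 2) / c ^ 2 - 1)) t =
          e * ((1 / c) * cross (fun i => v3 r i t) (curl A t (r t)) l
              - (1 / c) * pdt (A l) t (r t) - pdx V l t (r t))) := by
  obtain rfl : L = tachyonLagrangian c e m₀ A V := by ext t x v; exact hL t x v
  have hsuper (t : ℝ) : 0 < (∑ p, v3 r p t ^ 2) / c ^ 2 - 1 := by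
    rw [sub_pos, one_lt_div (by positivity), ← Real.lt_sqrt hc.le]
    exact hsup t
  refine forall₂_congr fun t l => ?_
  rw [pdX_sub_deriv_pdV_tachyonLagrangian (fun i => (hA i).differentiable one_ne_zero _)
    ((hV.differentiable one_ne_zero) _) (fun j => hr1 j t) (fun j => hr2 j t) hsuper, sub_eq_zero,
    eq_comm]

/-- a superluminal curve (tachyon) satisfies the Euler–Lagrange
equations of `ℒ(t,x,v) = m₀c²√(|v|²/c²−1) + (e/c)⟨A,v⟩ − eV` iff it satisfies
the tachyonic Lorentz-force equations of motion. -/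
theorem stmt9 (c e m₀ : ℝ) (hc : 0 < c) (hm : 0 < m₀)
    (A : Fin 3 → ℝ × (Fin 3 → ℝ) → ℝ) (V : ℝ × (Fin 3 → ℝ) → ℝ)
    (hA : ∀ l, ContDiff ℝ 1 (A l)) (hV : ContDiff ℝ 1 V)
    (L : ℝ → (Fin 3 → ℝ) → (Fin 3 → ℝ) → ℝ)
    (hL : ∀ t x v, L t x v =
      m₀ * c ^ 2 * Real.sqrt ((∑ i, v i ^ 2) / c ^ 2 - 1)
        + (e / c) * (∑ i, A i (t, x) * v i) - e * V (t, x))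
    (r : ℝ → Fin 3 → ℝ)
    (hr1 : ∀ l, Differentiable ℝ fun t => r t l)
    (hr2 : ∀ l, Differentiable ℝ (v3 r l))
    (hsup : ∀ t, c < Real.sqrt (∑ p, v3 r p t ^ 2)) :
    (∀ t, ∀ l : Fin 3,
        pdX L l t (r t) (fun i => v3 r i t)
          - deriv (fun τ => pdV L l τ (r τ) (fun i => v3 r i τ)) t = 0)
    ↔
    (∀ t, ∀ l : Fin 3,
        deriv (fun τ => m₀ * v3 r l τ /
            Real.sqrt ((∑ p, v3 r p τ ^ 2) / c ^ 2 - 1)) t =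
          e * ((1 / c) * cross (fun i => v3 r i t) (curl A t (r t)) l
              - (1 / c) * pdt (A l) t (r t) - pdx V l t (r t))) :=
  stmt9_general c e m₀ hc A V hA hV L hL r hr1 hr2 hsup
end

section
/- Let c > 0, let ψ : ℝ × ℝ³ → ℝ be a C¹ function, let r : ℝ → ℝ³ be a twice differentiable curve with |r'(t)| = c for all t, set e_v(t) = r'(t)/c, let w : ℝ → ℝ be a function with w(t) > 0 for all t, and let F : ℝ → ℝ³ be a function with ⟨F(t), e_v(t)⟩ = 0 for all t. Suppose that for all t the equation w(t)·[e_v'(t) − ⟨e_v(t), e_v'(t)⟩·e_v(t)] = F(t) − (1/w(t))·(c·(grad ψ)(t, r(t)) + (∂ψ/∂t)(t, r(t))·e_v(t)) holds. Then for all t: c·⟨e_v(t), (grad ψ)(t, r(t))⟩ + (∂ψ/∂t)(t, r(t)) = 0, i.e. the total derivative dψ/dt of ψ along the curve vanishes identically. -/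
/-- Direction of motion `e_v = r'/c` of a curve moving with the speed of light. -/
noncomputable def ev (c : ℝ) (r : ℝ → Fin 3 → ℝ) (l : Fin 3) (t : ℝ) : ℝ :=
  v3 r l t / c

open Matrix

section UnitVector

variable {ι : Type*} [Fintype ι]

theorem dotProduct_self_div_eq_one {c : ℝ} (hc : c ≠ 0) (v : ι → ℝ)
    (hv : √(∑ i, v i ^ 2) = c) : (fun i => v i / c) ⬝ᵥ (fun i => v i / c) = 1 := by
  have hsq : ∑ i, v i ^ 2 = c ^ 2 := by
    rw [← hv, Real.sq_sqrt (Finset.sum_nonneg fun i _ => sq_nonneg (v i))]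
  simp only [dotProduct, ← sq, div_pow, ← Finset.sum_div, hsq]
  exact div_self (pow_ne_zero 2 hc)

theorem dotProduct_sub_smul_self_eq_zero {e : ι → ℝ} (he : e ⬝ᵥ e = 1) (a : ι → ℝ) :
    e ⬝ᵥ (a - (e ⬝ᵥ a) • e) = 0 := by
  rw [dotProduct_sub, dotProduct_smul, he, smul_eq_mul, mul_one, sub_self]

theorem mul_dotProduct_add_eq_zero_of_eq {e a F g : ι → ℝ} {w c p : ℝ}
    (he : e ⬝ᵥ e = 1) (hF : F ⬝ᵥ e = 0) (hw : w ≠ 0)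
    (h : w • (a - (e ⬝ᵥ a) • e) = F - (1 / w) • (c • g + p • e)) :
    c * (e ⬝ᵥ g) + p = 0 := by
  have hdot := congrArg (e ⬝ᵥ ·) h
  simp only [dotProduct_smul, dotProduct_sub_smul_self_eq_zero he, dotProduct_sub,
    dotProduct_add, dotProduct_comm e F, hF, he, smul_eq_mul] at hdot
  have hw' : 1 / w ≠ 0 := one_div_ne_zero hw
  have : 1 / w * (c * (e ⬝ᵥ g) + p) = 0 := by linarith
  exact (mul_eq_zero.mp this).resolve_left hw'

end UnitVector

theorem stmt13_general (c : ℝ) (hc : 0 < c)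
    (ψ : ℝ × (Fin 3 → ℝ) → ℝ)
    (r : ℝ → Fin 3 → ℝ)
    (hlight : ∀ t, Real.sqrt (∑ p, v3 r p t ^ 2) = c)
    (w : ℝ → ℝ) (hw : ∀ t, 0 < w t)
    (F : ℝ → Fin 3 → ℝ)
    (hF : ∀ t, (∑ i, F t i * ev c r i t) = 0)
    (heq : ∀ t, ∀ l : Fin 3,
      w t * (deriv (fun τ => ev c r l τ) t
          - (∑ i, ev c r i t * deriv (fun τ => ev c r i τ) t) * ev c r l t) =
        F t l - (1 / w t) *
          (c * pdx ψ l t (r t) + pdt ψ t (r t) * ev c r l t)) :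
    ∀ t, c * (∑ i, ev c r i t * pdx ψ i t (r t)) + pdt ψ t (r t) = 0 := by
  intro t
  exact mul_dotProduct_add_eq_zero_of_eq (a := fun i => deriv (fun τ => ev c r i τ) t)
    (dotProduct_self_div_eq_one hc.ne' (fun p => v3 r p t) (hlight t)) (hF t) (hw t).ne'
    (funext (heq t))

/-- along solutions of the massless reduced equations
`w·[e_v' − ⟨e_v,e_v'⟩e_v] = F − (1/w)(c·grad ψ + (∂ψ/∂t)e_v)` with `F ⟂ e_v`,
the total derivative of `ψ` along the curve vanishes:
`c⟨e_v, grad ψ⟩ + ∂ψ/∂t = 0`. -/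
theorem stmt13 (c : ℝ) (hc : 0 < c)
    (ψ : ℝ × (Fin 3 → ℝ) → ℝ) (hψ : ContDiff ℝ 1 ψ)
    (r : ℝ → Fin 3 → ℝ)
    (hr1 : ∀ l, Differentiable ℝ fun t => r t l)
    (hr2 : ∀ l, Differentiable ℝ (v3 r l))
    (hlight : ∀ t, Real.sqrt (∑ p, v3 r p t ^ 2) = c)
    (w : ℝ → ℝ) (hw : ∀ t, 0 < w t)
    (F : ℝ → Fin 3 → ℝ)
    (hF : ∀ t, (∑ i, F t i * ev c r i t) = 0)
    (heq : ∀ t, ∀ l : Fin 3,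
      w t * (deriv (fun τ => ev c r l τ) t
          - (∑ i, ev c r i t * deriv (fun τ => ev c r i τ) t) * ev c r l t) =
        F t l - (1 / w t) *
          (c * pdx ψ l t (r t) + pdt ψ t (r t) * ev c r l t)) :
    ∀ t, c * (∑ i, ev c r i t * pdx ψ i t (r t)) + pdt ψ t (r t) = 0 :=
  stmt13_general c hc ψ r hlight w hw F hF heq
end
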